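/- arXiv:1603.06725 — 6 statements merged into one kernel-verified Lean document; each statement's English description precedes it below -/
import Mathlib

section
/- If {y_n}_{n≥0} is a log-convex sequence of positive reals, then the sequence z_n = Σ_{m=0}^n [n m] y_m, where [n m] denotes the unsigned Stirling numbers of the first kind, is also log-convex. -/
/-!
Let `L_w` be the linear functional on polynomials with `L_w (X ^ m) = w m`, so that
`z_n = L_y (P_n)` for the rising factorial `P_n = X (X + 1) ⋯ (X + n - 1)`. Since
`L_w (p * X) = L_{Ew} p` for the shift `(Ew) m = w (m + 1)`, the factor `X + n` in `P_{n+1}` gives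
`L_w (P_{n+1}) = L_{Ew} (P_n) + n L_w (P_n)`. Two steps of this recurrence express
`z_n, z_{n+1}, z_{n+2}` through `p = L_y P_n`, `q = L_{Ey} P_n`, `r = L_{E²y} P_n`, and
`z_n z_{n+2} - z_{n+1}^2 = (p r - q^2) + p q + n p^2`. Finally `q^2 ≤ p r` is Cauchy–Schwarz for
the nonnegative coefficients of `P_n`, applied termwise with `y_{m+1}^2 ≤ y_m y_{m+2}`.
-/

open Polynomial Finset

namespace Polynomial

section CommSemiring

variable {R : Type*} [CommSemiring R]

noncomputable def umbralEval (w : ℕ → R) : R[X] →ₗ[R] R :=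
  lsum fun m => LinearMap.mulRight R (w m)

theorem umbralEval_apply (w : ℕ → R) (p : R[X]) :
    umbralEval w p = ∑ m ∈ p.support, p.coeff m * w m :=
  rfl

theorem umbralEval_monomial (w : ℕ → R) (m : ℕ) (a : R) :
    umbralEval w (monomial m a) = a * w m := by
  simp [umbralEval, sum_monomial_index]

theorem umbralEval_C_mul_X_pow (w : ℕ → R) (m : ℕ) (a : R) :
    umbralEval w (C a * X ^ m) = a * w m := by
  rw [C_mul_X_pow_eq_monomial, umbralEval_monomial]

theorem umbralEval_mul_X (w : ℕ → R) (p : R[X]) :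
    umbralEval w (p * X) = umbralEval (fun m => w (m + 1)) p := by
  induction p using Polynomial.induction_on' with
  | add p q hp hq => rw [add_mul, map_add, map_add, hp, hq]
  | monomial m a => rw [monomial_mul_X, umbralEval_monomial, umbralEval_monomial]

theorem umbralEval_mul_X_add_C (w : ℕ → R) (p : R[X]) (c : R) :
    umbralEval w (p * (X + C c)) = umbralEval (fun m => w (m + 1)) p + c * umbralEval w p := by
  rw [mul_add, map_add, umbralEval_mul_X, mul_comm, ← smul_eq_C_mul, map_smul, smul_eq_mul]

theorem ascPochhammer_eval_eq_prod_range (n : ℕ) (x : R) :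
    (ascPochhammer R n).eval x = ∏ i ∈ range n, (x + i) := by
  induction n with
  | zero => simp
  | succ n ih => rw [ascPochhammer_succ_eval, ih, prod_range_succ]

theorem umbralEval_ascPochhammer_succ (w : ℕ → R) (n : ℕ) :
    umbralEval w (ascPochhammer R (n + 1)) =
      umbralEval (fun m => w (m + 1)) (ascPochhammer R n) +
        n * umbralEval w (ascPochhammer R n) := by
  rw [ascPochhammer_succ_right, ← C_eq_natCast, umbralEval_mul_X_add_C]

end CommSemiring

section Ordered

variable {R : Type*} [CommSemiring R] [LinearOrder R] [IsStrictOrderedRing R]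

theorem coeff_ascPochhammer_nonneg (n m : ℕ) : 0 ≤ (ascPochhammer R n).coeff m := by
  rw [← ascPochhammer_map (Nat.castRingHom R), coeff_map]
  exact Nat.cast_nonneg _

theorem umbralEval_nonneg {w : ℕ → R} (hw : ∀ m, 0 ≤ w m) {p : R[X]}
    (hp : ∀ m, 0 ≤ p.coeff m) :
    0 ≤ umbralEval w p := by
  rw [umbralEval_apply]
  exact sum_nonneg fun m _ => mul_nonneg (hp m) (hw m)

theorem umbralEval_shift_sq_le [ExistsAddOfLE R] {w : ℕ → R} (hw : ∀ m, 0 ≤ w m)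
    (hlc : ∀ m, w (m + 1) ^ 2 ≤ w m * w (m + 2)) {p : R[X]} (hp : ∀ m, 0 ≤ p.coeff m) :
    umbralEval (fun m => w (m + 1)) p ^ 2 ≤
      umbralEval w p * umbralEval (fun m => w (m + 2)) p := by
  simp only [umbralEval_apply]
  refine sum_sq_le_sum_mul_sum_of_sq_le_mul _ (fun m _ => mul_nonneg (hp m) (hw m))
    (fun m _ => mul_nonneg (hp m) (hw (m + 2))) fun m _ => ?_
  calc (p.coeff m * w (m + 1)) ^ 2 = p.coeff m ^ 2 * w (m + 1) ^ 2 := mul_pow _ _ _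
    _ ≤ p.coeff m ^ 2 * (w m * w (m + 2)) := mul_le_mul_of_nonneg_left (hlc m) (sq_nonneg _)
    _ = p.coeff m * w m * (p.coeff m * w (m + 2)) := by ring

end Ordered

theorem umbralEval_ascPochhammer_sq_le {R : Type*} [CommRing R] [LinearOrder R]
    [IsStrictOrderedRing R] {w : ℕ → R} (hw : ∀ m, 0 ≤ w m)
    (hlc : ∀ m, w (m + 1) ^ 2 ≤ w m * w (m + 2)) (n : ℕ) :
    umbralEval w (ascPochhammer R (n + 1)) ^ 2 ≤
      umbralEval w (ascPochhammer R n) * umbralEval w (ascPochhammer R (n + 2)) := by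
  set p := umbralEval w (ascPochhammer R n)
  set q := umbralEval (fun m => w (m + 1)) (ascPochhammer R n)
  set r := umbralEval (fun m => w (m + 2)) (ascPochhammer R n)
  have hz₁ : umbralEval w (ascPochhammer R (n + 1)) = q + n * p :=
    umbralEval_ascPochhammer_succ w n
  have hz₂ : umbralEval w (ascPochhammer R (n + 2)) = r + n * q + (n + 1) * (q + n * p) := by
    rw [umbralEval_ascPochhammer_succ, umbralEval_ascPochhammer_succ, hz₁]
    push_cast
    rfl
  have hp : 0 ≤ p := umbralEval_nonneg hw (coeff_ascPochhammer_nonneg n)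
  have hq : 0 ≤ q := umbralEval_nonneg (fun m => hw (m + 1)) (coeff_ascPochhammer_nonneg n)
  have hqr : q ^ 2 ≤ p * r := umbralEval_shift_sq_le hw hlc (coeff_ascPochhammer_nonneg n)
  have hn : (0 : R) ≤ n := n.cast_nonneg
  rw [hz₁, hz₂]
  nlinarith [mul_nonneg hp hq, mul_nonneg hn (mul_nonneg hp hp)]

theorem umbralEval_eq_sum_of_eval_eq {R : Type*} [CommRing R] [IsDomain R] [Infinite R]
    {p : R[X]} {s : Finset ℕ} {c : ℕ → R} (h : ∀ x, p.eval x = ∑ m ∈ s, c m * x ^ m)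
    (w : ℕ → R) : umbralEval w p = ∑ m ∈ s, c m * w m := by
  have hp : p = ∑ m ∈ s, C (c m) * X ^ m := Polynomial.funext fun x => by
    simp [h, eval_finsetSum]
  simp only [hp, map_sum, umbralEval_C_mul_X_pow]

end Polynomial

/-- The unsigned Stirling numbers of the first kind `S n m`, characterized by
`x(x+1)⋯(x+n−1) = Σ_{m=0}^n S n m * x^m`. If `y` is a positive log-convex
sequence, then its Stirling transform of the first kind is log-convex. -/
theorem stmt_1 (S : ℕ → ℕ → ℝ)
    (hS : ∀ (n : ℕ) (x : ℝ),
      ∏ i ∈ Finset.range n, (x + i) = ∑ m ∈ Finset.range (n + 1), S n m * x ^ m)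
    (y : ℕ → ℝ) (hy : ∀ n, 0 < y n)
    (hlc : ∀ j : ℕ, 1 ≤ j → (y j) ^ 2 ≤ y (j - 1) * y (j + 1)) :
    ∀ j : ℕ, 1 ≤ j →
      (∑ m ∈ Finset.range (j + 1), S j m * y m) ^ 2 ≤
        (∑ m ∈ Finset.range (j - 1 + 1), S (j - 1) m * y m) *
          (∑ m ∈ Finset.range (j + 2), S (j + 1) m * y m) := by
  have hz : ∀ n, ∑ m ∈ range (n + 1), S n m * y m = umbralEval y (ascPochhammer ℝ n) :=
    fun n => (umbralEval_eq_sum_of_eval_eq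
      (fun x => (ascPochhammer_eval_eq_prod_range n x).trans (hS n x)) y).symm
  intro j hj
  obtain ⟨n, rfl⟩ : ∃ n, j = n + 1 := ⟨j - 1, by omega⟩
  rw [Nat.add_sub_cancel, show n + 1 + 2 = n + 2 + 1 from rfl, hz, hz, hz]
  refine umbralEval_ascPochhammer_sq_le (fun m => (hy m).le) (fun m => ?_) n
  simpa using hlc (m + 1) (by omega)
end

section
/- For every positive integer k, the sequence ω_n^{(k)} = Σ_{m=0}^n [n m] / (m+1)^k (n ≥ 0) is log-convex: for all n ≥ 1, (ω_n^{(k)})^2 ≤ ω_{n-1}^{(k)} ω_{n+1}^{(k)}. -/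
/-!
Writing `ω n = Σ_m [n m] μ m` with `μ m = 1 / (m + 1) ^ k`, the recurrence
`[n+1 m+1] = n [n m+1] + [n m]` gives `ω (n + 1) = ω' n + n ω n`, where `ω'` is the same
transform of the shifted sequence `m ↦ μ (m + 1)`. Since `μ` is positive and log-convex,
Cauchy–Schwarz gives `ω' n ^ 2 ≤ ω n ω'' n`, and expanding `ω (n + 1)` and `ω (n + 2)` the
difference `ω n ω (n + 2) - ω (n + 1) ^ 2` becomes `(ω n ω'' n - ω' n ^ 2) + ω n ω' n + n ω n ^ 2 ≥ 0`.
The product identity determines `S n m` for `m ≤ n` as the coefficients of a polynomial, so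
`S` agrees with `Nat.stirlingFirst` on every term of the sums.
-/

open Finset

section StirlingTransform

variable {R : Type*}

def stirlingTransform [Semiring R] (n : ℕ) (μ : ℕ → R) : R :=
  ∑ m ∈ range (n + 1), (Nat.stirlingFirst n m : R) * μ m

theorem stirlingTransform_succ [Semiring R] (n : ℕ) (μ : ℕ → R) :
    stirlingTransform (n + 1) μ =
      stirlingTransform n (fun m => μ (m + 1)) + n * stirlingTransform n μ := by
  have hext : stirlingTransform n μ =
      ∑ m ∈ range (n + 1), (Nat.stirlingFirst n (m + 1) : R) * μ (m + 1) +
        Nat.stirlingFirst n 0 * μ 0 := by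
    rw [stirlingTransform, ← sum_range_succ' (fun m => (Nat.stirlingFirst n m : R) * μ m),
      sum_range_succ _ (n + 1), Nat.stirlingFirst_eq_zero_of_lt (Nat.lt_succ_self n),
      Nat.cast_zero, zero_mul, add_zero]
  have hzero : (n : R) * Nat.stirlingFirst n 0 = 0 := by
    cases n <;> simp
  rw [stirlingTransform, sum_range_succ', hext, mul_add, ← mul_assoc, hzero, zero_mul, add_zero,
    stirlingTransform, mul_sum, ← sum_add_distrib]
  simp only [Nat.stirlingFirst_succ_succ, Nat.stirlingFirst_succ_zero, Nat.cast_add,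
    Nat.cast_mul, Nat.cast_zero, zero_mul, zero_add, add_mul, mul_assoc, add_comm]

theorem prod_range_add_eq_stirlingTransform_pow [CommSemiring R] (n : ℕ) (x : R) :
    ∏ i ∈ range n, (x + i) = stirlingTransform n (x ^ ·) := by
  induction n with
  | zero => simp [stirlingTransform]
  | succ n ih =>
    rw [prod_range_succ, ih, stirlingTransform_succ]
    simp only [stirlingTransform, pow_succ, ← mul_assoc, ← sum_mul]
    ring

variable [CommRing R] [LinearOrder R] [IsStrictOrderedRing R]

theorem stirlingTransform_nonneg {μ : ℕ → R} (hμ : ∀ m, 0 ≤ μ m) (n : ℕ) :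
    0 ≤ stirlingTransform n μ :=
  sum_nonneg fun m _ => mul_nonneg (Nat.cast_nonneg _) (hμ m)

theorem sq_sum_mul_succ_le {s : Finset ℕ} {c μ : ℕ → R} (hc : ∀ m, 0 ≤ c m)
    (hμ : ∀ m, 0 ≤ μ m) (hlog : ∀ m, μ (m + 1) ^ 2 ≤ μ m * μ (m + 2)) :
    (∑ m ∈ s, c m * μ (m + 1)) ^ 2 ≤ (∑ m ∈ s, c m * μ m) * ∑ m ∈ s, c m * μ (m + 2) := by
  refine sum_sq_le_sum_mul_sum_of_sq_le_mul s (fun m _ => mul_nonneg (hc m) (hμ m))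
    (fun m _ => mul_nonneg (hc m) (hμ (m + 2))) fun m _ => ?_
  calc (c m * μ (m + 1)) ^ 2 = c m ^ 2 * μ (m + 1) ^ 2 := by ring
    _ ≤ c m ^ 2 * (μ m * μ (m + 2)) := by gcongr; exact hlog m
    _ = c m * μ m * (c m * μ (m + 2)) := by ring

theorem sq_stirlingTransform_le {μ : ℕ → R} (hμ : ∀ m, 0 ≤ μ m)
    (hlog : ∀ m, μ (m + 1) ^ 2 ≤ μ m * μ (m + 2)) (n : ℕ) :
    stirlingTransform (n + 1) μ ^ 2 ≤ stirlingTransform n μ * stirlingTransform (n + 2) μ := by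
  set A := stirlingTransform n μ
  set B := stirlingTransform n (fun m => μ (m + 1))
  set C := stirlingTransform n (fun m => μ (m + 2))
  have hCS : B ^ 2 ≤ A * C :=
    sq_sum_mul_succ_le (fun m => Nat.cast_nonneg _) hμ hlog
  have hA : 0 ≤ A := stirlingTransform_nonneg hμ n
  have hB : 0 ≤ B := stirlingTransform_nonneg (fun m => hμ (m + 1)) n
  rw [stirlingTransform_succ (n + 1), stirlingTransform_succ n, stirlingTransform_succ n]
  push_cast
  nlinarith [mul_nonneg hA hB, mul_nonneg (Nat.cast_nonneg n : (0 : R) ≤ n) (mul_nonneg hA hA)]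

end StirlingTransform

theorem eq_of_forall_sum_mul_pow_eq {R : Type*} [CommRing R] [IsDomain R] [Infinite R]
    {N : ℕ} {a b : ℕ → R}
    (h : ∀ x : R, ∑ m ∈ range N, a m * x ^ m = ∑ m ∈ range N, b m * x ^ m) {m : ℕ}
    (hm : m < N) : a m = b m := by
  have hp : ∑ m ∈ range N, Polynomial.C (a m) * Polynomial.X ^ m =
      ∑ m ∈ range N, Polynomial.C (b m) * Polynomial.X ^ m :=
    Polynomial.funext fun x => by simpa [Polynomial.eval_finsetSum] using h x
  simpa [Polynomial.finsetSum_coeff, Polynomial.coeff_C_mul, Polynomial.coeff_X_pow, hm]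
    using congrArg (Polynomial.coeff · m) hp

theorem one_div_succ_pow_sq_le (k m : ℕ) :
    (1 / (((m + 1 : ℕ) : ℝ) + 1) ^ k) ^ 2 ≤
      1 / ((m : ℝ) + 1) ^ k * (1 / (((m + 2 : ℕ) : ℝ) + 1) ^ k) := by
  have hle : (((m : ℝ) + 1) * (m + 3)) ^ k ≤ (((m : ℝ) + 2) ^ 2) ^ k := by
    gcongr
    nlinarith
  calc (1 / (((m + 1 : ℕ) : ℝ) + 1) ^ k) ^ 2 = 1 / (((m : ℝ) + 2) ^ 2) ^ k := by
        push_cast; rw [← pow_mul, mul_comm, pow_mul, one_div_pow]; ring_nf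
    _ ≤ 1 / (((m : ℝ) + 1) * (m + 3)) ^ k := one_div_le_one_div_of_le (by positivity) hle
    _ = 1 / ((m : ℝ) + 1) ^ k * (1 / (((m + 2 : ℕ) : ℝ) + 1) ^ k) := by
        push_cast; rw [mul_pow]; ring_nf

theorem stmt_2_general (k : ℕ) (S : ℕ → ℕ → ℝ)
    (hS : ∀ (n : ℕ) (x : ℝ),
      ∏ i ∈ Finset.range n, (x + i) = ∑ m ∈ Finset.range (n + 1), S n m * x ^ m) :
    ∀ n : ℕ, 1 ≤ n →
      (∑ m ∈ Finset.range (n + 1), S n m / ((m : ℝ) + 1) ^ k) ^ 2 ≤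
        (∑ m ∈ Finset.range (n - 1 + 1), S (n - 1) m / ((m : ℝ) + 1) ^ k) *
          (∑ m ∈ Finset.range (n + 2), S (n + 1) m / ((m : ℝ) + 1) ^ k) := by
  have hS_eq (n m : ℕ) (hm : m < n + 1) : S n m = Nat.stirlingFirst n m :=
    eq_of_forall_sum_mul_pow_eq
      (fun x => (hS n x).symm.trans (prod_range_add_eq_stirlingTransform_pow n x)) hm
  have hω (n : ℕ) : ∑ m ∈ range (n + 1), S n m / ((m : ℝ) + 1) ^ k =
      stirlingTransform n (fun m => 1 / ((m : ℝ) + 1) ^ k) :=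
    sum_congr rfl fun m hm => by rw [hS_eq n m (mem_range.mp hm), mul_one_div]
  intro n hn
  obtain ⟨p, rfl⟩ := Nat.exists_eq_add_of_le' hn
  rw [Nat.add_sub_cancel, hω, hω, hω]
  exact sq_stirlingTransform_le (fun m => by positivity) (one_div_succ_pow_sq_le k) p

/-- For `k ≥ 1`, the sequence `ω n = Σ_{m=0}^n [n m] / (m+1)^k` is log-convex,
where `[n m] = S n m` are the unsigned Stirling numbers of the first kind,
characterized by `x(x+1)⋯(x+n−1) = Σ_{m=0}^n S n m * x^m`. -/
theorem stmt_2 (k : ℕ) (hk : 0 < k) (S : ℕ → ℕ → ℝ)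
    (hS : ∀ (n : ℕ) (x : ℝ),
      ∏ i ∈ Finset.range n, (x + i) = ∑ m ∈ Finset.range (n + 1), S n m * x ^ m) :
    ∀ n : ℕ, 1 ≤ n →
      (∑ m ∈ Finset.range (n + 1), S n m / ((m : ℝ) + 1) ^ k) ^ 2 ≤
        (∑ m ∈ Finset.range (n - 1 + 1), S (n - 1) m / ((m : ℝ) + 1) ^ k) *
          (∑ m ∈ Finset.range (n + 2), S (n + 1) m / ((m : ℝ) + 1) ^ k) :=
  stmt_2_general k S hS
end

section
/- For k = 1 and all n ≥ 1, the Cauchy numbers of the first kind c_n = ∫_0^1 x(x−1)⋯(x−n+1) dx satisfy: the sequence {|c_n|}_{n≥2} is log-convex, i.e., c_n^2 ≤ c_{n−1} c_{n+1} in absolute value, equivalently (∫_0^1 (x)_n dx)^2 ≤ (∫_0^1 (x)_{n−1} dx)(∫_0^1 (x)_{n+1} dx) for n ≥ 3 after taking absolute values. -/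
/-!
On `[0, 1]` the falling factorial `(x)_n` has the constant sign `(-1)^(n-1)`, so
`|c_n| = ∫_0^1 |(x)_n| dx`. Pointwise, `(x)_n^2 ≤ (x)_(n-1) (x)_(n+1)` for `x ≤ n - 1`, because
`(x - n + 1)^2 ≤ (x - n + 1)(x - n)` there. Cauchy–Schwarz applied to
`|(x)_n| ≤ √|(x)_(n-1)| √|(x)_(n+1)|` then gives `|c_n|^2 ≤ |c_(n-1)| |c_(n+1)|`.
-/

open MeasureTheory Polynomial

theorem sq_integral_abs_le_integral_mul_integral {α : Type*} [MeasurableSpace α] {μ : Measure α}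
    {f g h : α → ℝ} (hg : Integrable g μ) (hh : Integrable h μ) (hg₀ : 0 ≤ᵐ[μ] g)
    (hh₀ : 0 ≤ᵐ[μ] h) (hfgh : ∀ᵐ x ∂μ, f x ^ 2 ≤ g x * h x) :
    (∫ x, |f x| ∂μ) ^ 2 ≤ (∫ x, g x ∂μ) * ∫ x, h x ∂μ := by
  have memLp_sqrt {u : α → ℝ} (hu : Integrable u μ) (hu₀ : 0 ≤ᵐ[μ] u) :
      MemLp (fun x => √(u x)) 2 μ := by
    rw [memLp_two_iff_integrable_sq
      hu.aestronglyMeasurable.aemeasurable.sqrt.aestronglyMeasurable]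
    refine hu.congr ?_
    filter_upwards [hu₀] with x hx using (Real.sq_sqrt hx).symm
  have integral_sqrt_rpow_two {u : α → ℝ} (hu₀ : 0 ≤ᵐ[μ] u) :
      ∫ x, √(u x) ^ (2 : ℝ) ∂μ = ∫ x, u x ∂μ := by
    refine integral_congr_ae ?_
    filter_upwards [hu₀] with x hx
    rw [Real.rpow_two, Real.sq_sqrt hx]
  have hsqrt_g := memLp_sqrt hg hg₀
  have hsqrt_h := memLp_sqrt hh hh₀
  have hpointwise : ∀ᵐ x ∂μ, |f x| ≤ √(g x) * √(h x) := by
    filter_upwards [hg₀, hfgh] with x hx hfx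
    rw [← Real.sqrt_mul hx, ← Real.sqrt_sq_eq_abs]
    exact Real.sqrt_le_sqrt hfx
  have hle : ∫ x, |f x| ∂μ ≤ √(∫ x, g x ∂μ) * √(∫ x, h x ∂μ) := calc
    ∫ x, |f x| ∂μ ≤ ∫ x, √(g x) * √(h x) ∂μ :=
      integral_mono_of_nonneg (ae_of_all _ fun _ => abs_nonneg _)
        (hsqrt_g.integrable_mul hsqrt_h) hpointwise
    _ ≤ (∫ x, √(g x) ^ (2 : ℝ) ∂μ) ^ (1 / 2 : ℝ) * (∫ x, √(h x) ^ (2 : ℝ) ∂μ) ^ (1 / 2 : ℝ) :=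
      integral_mul_le_Lp_mul_Lq_of_nonneg Real.HolderConjugate.two_two
        (ae_of_all _ fun _ => Real.sqrt_nonneg _) (ae_of_all _ fun _ => Real.sqrt_nonneg _)
        (by simpa using hsqrt_g) (by simpa using hsqrt_h)
    _ = √(∫ x, g x ∂μ) * √(∫ x, h x ∂μ) := by
      rw [integral_sqrt_rpow_two hg₀, integral_sqrt_rpow_two hh₀, Real.sqrt_eq_rpow,
        Real.sqrt_eq_rpow]
  calc (∫ x, |f x| ∂μ) ^ 2 ≤ (√(∫ x, g x ∂μ) * √(∫ x, h x ∂μ)) ^ 2 :=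
        pow_le_pow_left₀ (integral_nonneg fun _ => abs_nonneg _) hle 2
    _ = (∫ x, g x ∂μ) * ∫ x, h x ∂μ := by
      rw [mul_pow, Real.sq_sqrt (integral_nonneg_of_ae hg₀),
        Real.sq_sqrt (integral_nonneg_of_ae hh₀)]

theorem descPochhammer_eval_sq_le_mul {x : ℝ} {n : ℕ} (hx : x ≤ n) :
    (descPochhammer ℝ (n + 1)).eval x ^ 2 ≤
      (descPochhammer ℝ n).eval x * (descPochhammer ℝ (n + 2)).eval x := by
  simp only [descPochhammer_succ_eval]
  push_cast
  nlinarith [mul_nonneg (sq_nonneg ((descPochhammer ℝ n).eval x)) (sub_nonneg.2 hx)]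

theorem neg_one_pow_mul_descPochhammer_eval_nonneg {x : ℝ} (hx : x ∈ Set.Icc (0 : ℝ) 1) (n : ℕ) :
    0 ≤ (-1) ^ n * (descPochhammer ℝ (n + 1)).eval x := by
  induction n with
  | zero => simpa using hx.1
  | succ n ih =>
    have hfactor : 0 ≤ (n + 1 : ℝ) - x := by linarith [hx.2, (n.cast_nonneg : (0 : ℝ) ≤ n)]
    calc (0 : ℝ) ≤ ((-1) ^ n * (descPochhammer ℝ (n + 1)).eval x) * ((n + 1 : ℝ) - x) :=
          mul_nonneg ih hfactor
      _ = (-1) ^ (n + 1) * (descPochhammer ℝ (n + 1 + 1)).eval x := by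
          rw [descPochhammer_succ_eval (n + 1)]; push_cast; ring

theorem abs_integral_descPochhammer_eval (n : ℕ) :
    |∫ x in (0 : ℝ)..1, (descPochhammer ℝ n).eval x| =
      ∫ x in (0 : ℝ)..1, |(descPochhammer ℝ n).eval x| := by
  rcases n with _ | n
  · simp
  have habs : Set.EqOn (fun x => |(descPochhammer ℝ (n + 1)).eval x|)
      (fun x => (-1) ^ n * (descPochhammer ℝ (n + 1)).eval x) (Set.uIcc 0 1) := fun x hx => by
    rw [Set.uIcc_of_le zero_le_one] at hx
    dsimp only
    rw [← abs_of_nonneg (neg_one_pow_mul_descPochhammer_eval_nonneg hx n), abs_mul,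
      abs_neg_one_pow, one_mul]
  have hnonneg : 0 ≤ (-1) ^ n * ∫ x in (0 : ℝ)..1, (descPochhammer ℝ (n + 1)).eval x := by
    rw [← intervalIntegral.integral_const_mul]
    exact intervalIntegral.integral_nonneg zero_le_one fun x hx =>
      neg_one_pow_mul_descPochhammer_eval_nonneg hx n
  rw [intervalIntegral.integral_congr habs, intervalIntegral.integral_const_mul,
    ← abs_of_nonneg hnonneg, abs_mul, abs_neg_one_pow, one_mul]

/-- Cauchy numbers of the first kind `c n = ∫_0^1 x(x−1)⋯(x−n+1) dx`:
the sequence of absolute values is log-convex for `n ≥ 3`. -/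
theorem stmt_3
    (c : ℕ → ℝ)
    (hc : ∀ n, c n = ∫ x in (0:ℝ)..1, ∏ i ∈ Finset.range n, (x - i)) :
    ∀ n : ℕ, 3 ≤ n → |c n| ^ 2 ≤ |c (n - 1)| * |c (n + 1)| := by
  intro n hn
  obtain ⟨k, rfl⟩ : ∃ k, n = k + 2 := ⟨n - 2, by omega⟩
  have habs_c (m : ℕ) : |c m| = ∫ x in Set.Ioc (0 : ℝ) 1, |(descPochhammer ℝ m).eval x| := by
    simp only [hc, ← descPochhammer_eval_eq_prod_range]
    rw [abs_integral_descPochhammer_eval, intervalIntegral.integral_of_le zero_le_one]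
  have hint (m : ℕ) : Integrable (fun x => |(descPochhammer ℝ m).eval x|)
      (volume.restrict (Set.Ioc (0 : ℝ) 1)) :=
    (descPochhammer ℝ m).continuous.abs.integrableOn_Ioc
  have hpointwise : ∀ᵐ x ∂(volume.restrict (Set.Ioc (0 : ℝ) 1)),
      (descPochhammer ℝ (k + 2)).eval x ^ 2 ≤
        |(descPochhammer ℝ (k + 1)).eval x| * |(descPochhammer ℝ (k + 3)).eval x| := by
    refine ae_restrict_of_forall_mem measurableSet_Ioc fun x hx => ?_
    have hxk : x ≤ (k + 1 : ℕ) := by push_cast; linarith [hx.2, (k.cast_nonneg : (0 : ℝ) ≤ k)]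
    rw [← abs_mul]
    exact (descPochhammer_eval_sq_le_mul hxk).trans (le_abs_self _)
  rw [show k + 2 - 1 = k + 1 from rfl, habs_c, habs_c, habs_c]
  exact sq_integral_abs_le_integral_mul_integral (hint _) (hint _)
    (ae_of_all _ fun _ => abs_nonneg _) (ae_of_all _ fun _ => abs_nonneg _) hpointwise
end

section
/- Let k ≥ 1 and for n ≥ 1 define I_n = ∫_{[0,1]^k} (x_1⋯x_k)(1 − x_1⋯x_k)(2 − x_1⋯x_k)⋯(n−1 − x_1⋯x_k) dx_1⋯dx_k. Then for all n ≥ 3, I_n^2 ≤ I_{n−1} I_{n+1}. Consequently the sequence {|c_n^{(k)}|}_{n≥2} of absolute values of poly-Cauchy numbers of the first kind is log-convex. -/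
/-!
With `p = x₁ ⋯ x_k ∈ [0, 1]`, write `g n p = p (1 - p) ⋯ (n - 1 - p) ≥ 0`, so that `I n` is the cube
integral of `g n`. Since `g (n + 1) = g n * (n - p)`, the pointwise inequality
`g n ^ 2 ≤ g (n - 1) * g (n + 1)` reduces to `n - 1 - p ≤ n - p`. The Cauchy–Schwarz inequality
applied to `√(g (n - 1))` and `√(g (n + 1))` integrates it to `I n ^ 2 ≤ I (n - 1) * I (n + 1)`.
Finally `(p)_n = (-1) ^ (n - 1) g n`, so `|c n| = I n` for `n ≥ 1`.
-/

open MeasureTheory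

noncomputable def cubeInt (k : ℕ) (f : ℝ → ℝ) : ℝ :=
  ∫ x : Fin k → ℝ in Set.univ.pi fun _ => Set.Icc (0:ℝ) 1, f (∏ i, x i)

section CauchySchwarz

variable {α : Type*} [MeasurableSpace α] {μ : Measure α}

lemma memLp_two_sqrt {g : α → ℝ} (hg : Integrable g μ) (hg0 : 0 ≤ᵐ[μ] g) :
    MemLp (fun x => √(g x)) 2 μ := by
  have hmeas : AEStronglyMeasurable (fun x => √(g x)) μ :=
    hg.aestronglyMeasurable.aemeasurable.sqrt.aestronglyMeasurable
  refine (memLp_two_iff_integrable_sq hmeas).2 (hg.congr ?_)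
  filter_upwards [hg0] with x hx
  exact (Real.sq_sqrt hx).symm

lemma integral_sqrt_rpow_two {g : α → ℝ} (hg0 : 0 ≤ᵐ[μ] g) :
    ∫ x, √(g x) ^ (2:ℝ) ∂μ = ∫ x, g x ∂μ := by
  refine integral_congr_ae ?_
  filter_upwards [hg0] with x hx
  rw [Real.rpow_two, Real.sq_sqrt hx]

/-- Cauchy–Schwarz for `√g` and `√h`. -/
theorem sq_integral_le_integral_mul_integral {f g h : α → ℝ} (hf0 : 0 ≤ᵐ[μ] f)
    (hg : Integrable g μ) (hh : Integrable h μ) (hg0 : 0 ≤ᵐ[μ] g) (hh0 : 0 ≤ᵐ[μ] h)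
    (hfgh : ∀ᵐ x ∂μ, f x ^ 2 ≤ g x * h x) :
    (∫ x, f x ∂μ) ^ 2 ≤ (∫ x, g x ∂μ) * ∫ x, h x ∂μ := by
  have hsg := memLp_two_sqrt hg hg0
  have hsh := memLp_two_sqrt hh hh0
  have hconj : (2:ℝ).HolderConjugate 2 := by constructor <;> norm_num
  have hf_le : ∫ x, f x ∂μ ≤ ∫ x, √(g x) * √(h x) ∂μ := by
    refine integral_mono_of_nonneg hf0 (hsg.integrable_mul hsh) ?_
    filter_upwards [hf0, hg0, hfgh] with x hfx hgx hfghx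
    rw [← Real.sqrt_mul hgx, ← Real.sqrt_sq hfx]
    exact Real.sqrt_le_sqrt hfghx
  have holder : ∫ x, √(g x) * √(h x) ∂μ ≤ √(∫ x, g x ∂μ) * √(∫ x, h x ∂μ) := by
    have := integral_mul_le_Lp_mul_Lq_of_nonneg hconj
      (.of_forall fun x => Real.sqrt_nonneg (g x)) (.of_forall fun x => Real.sqrt_nonneg (h x))
      (by rwa [ENNReal.ofReal_ofNat]) (by rwa [ENNReal.ofReal_ofNat])
    rwa [integral_sqrt_rpow_two hg0, integral_sqrt_rpow_two hh0, ← Real.sqrt_eq_rpow,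
      ← Real.sqrt_eq_rpow] at this
  calc (∫ x, f x ∂μ) ^ 2 ≤ (√(∫ x, g x ∂μ) * √(∫ x, h x ∂μ)) ^ 2 :=
        pow_le_pow_left₀ (integral_nonneg_of_ae hf0) (hf_le.trans holder) 2
    _ = (∫ x, g x ∂μ) * ∫ x, h x ∂μ := by
        rw [mul_pow, Real.sq_sqrt (integral_nonneg_of_ae hg0),
          Real.sq_sqrt (integral_nonneg_of_ae hh0)]

end CauchySchwarz

section UnitCube

variable {k : ℕ}

lemma prod_mem_Icc_of_mem_pi {x : Fin k → ℝ}
    (hx : x ∈ Set.univ.pi fun _ => Set.Icc (0:ℝ) 1) : (∏ i, x i) ∈ Set.Icc (0:ℝ) 1 :=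
  ⟨Finset.prod_nonneg fun i _ => (hx i (Set.mem_univ i)).1,
    Finset.prod_le_one (fun i _ => (hx i (Set.mem_univ i)).1)
      (fun i _ => (hx i (Set.mem_univ i)).2)⟩

lemma ae_prod_mem_Icc :
    ∀ᵐ x ∂(volume.restrict (Set.univ.pi fun _ => Set.Icc (0:ℝ) 1) : Measure (Fin k → ℝ)),
      (∏ i, x i) ∈ Set.Icc (0:ℝ) 1 :=
  (ae_restrict_mem (MeasurableSet.univ_pi fun _ => measurableSet_Icc)).mono
    fun _ => prod_mem_Icc_of_mem_pi

lemma integrableOn_cube_comp_prod {f : ℝ → ℝ} (hf : Continuous f) :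
    IntegrableOn (fun x : Fin k → ℝ => f (∏ i, x i)) (Set.univ.pi fun _ => Set.Icc (0:ℝ) 1) :=
  (hf.comp (by fun_prop)).continuousOn.integrableOn_compact (isCompact_univ_pi fun _ => isCompact_Icc)

lemma cubeInt_nonneg {f : ℝ → ℝ} (hf : ∀ p ∈ Set.Icc (0:ℝ) 1, 0 ≤ f p) : 0 ≤ cubeInt k f :=
  integral_nonneg_of_ae (ae_prod_mem_Icc.mono fun _ hx => hf _ hx)

lemma cubeInt_const_mul (a : ℝ) (f : ℝ → ℝ) :
    cubeInt k (fun p => a * f p) = a * cubeInt k f :=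
  integral_const_mul a _

lemma sq_cubeInt_le {f g h : ℝ → ℝ} (hg : Continuous g) (hh : Continuous h)
    (hf0 : ∀ p ∈ Set.Icc (0:ℝ) 1, 0 ≤ f p) (hg0 : ∀ p ∈ Set.Icc (0:ℝ) 1, 0 ≤ g p)
    (hh0 : ∀ p ∈ Set.Icc (0:ℝ) 1, 0 ≤ h p)
    (hfgh : ∀ p ∈ Set.Icc (0:ℝ) 1, f p ^ 2 ≤ g p * h p) :
    cubeInt k f ^ 2 ≤ cubeInt k g * cubeInt k h :=
  sq_integral_le_integral_mul_integral (ae_prod_mem_Icc.mono fun _ hx => hf0 _ hx)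
    (integrableOn_cube_comp_prod hg) (integrableOn_cube_comp_prod hh)
    (ae_prod_mem_Icc.mono fun _ hx => hg0 _ hx) (ae_prod_mem_Icc.mono fun _ hx => hh0 _ hx)
    (ae_prod_mem_Icc.mono fun _ hx => hfgh _ hx)

end UnitCube

section AbsFalling

/-- `p (1 - p) ⋯ (n - 1 - p)`, which equals `|(p)_n|` on `[0, 1]` for `n ≥ 1`. -/
noncomputable def absFalling (n : ℕ) (p : ℝ) : ℝ :=
  p * ∏ i ∈ Finset.range (n - 1), ((i : ℝ) + 1 - p)

@[fun_prop]
lemma continuous_absFalling (n : ℕ) : Continuous (absFalling n) := by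
  unfold absFalling; fun_prop

lemma absFalling_nonneg (n : ℕ) {p : ℝ} (hp : p ∈ Set.Icc (0:ℝ) 1) : 0 ≤ absFalling n p :=
  mul_nonneg hp.1 (Finset.prod_nonneg fun i _ => by linarith [hp.2, (i.cast_nonneg : (0:ℝ) ≤ i)])

lemma absFalling_add_two (n : ℕ) (p : ℝ) :
    absFalling (n + 2) p = absFalling (n + 1) p * (n + 1 - p) := by
  simp only [absFalling, Nat.add_sub_cancel, show n + 2 - 1 = n + 1 by omega,
    Finset.prod_range_succ, mul_assoc]

lemma absFalling_sq_le (n : ℕ) {p : ℝ} (hp : p ∈ Set.Icc (0:ℝ) 1) :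
    absFalling (n + 2) p ^ 2 ≤ absFalling (n + 1) p * absFalling (n + 3) p := by
  have hn : (0:ℝ) ≤ n + 1 - p := by linarith [hp.2, (n.cast_nonneg : (0:ℝ) ≤ n)]
  rw [absFalling_add_two (n + 1), absFalling_add_two n]
  push_cast
  have key : (n + 1 - p) * (n + 1 - p) ≤ (n + 1 - p) * (n + 1 + 1 - p) :=
    mul_le_mul_of_nonneg_left (by linarith) hn
  calc (absFalling (n + 1) p * (n + 1 - p)) ^ 2
      = absFalling (n + 1) p ^ 2 * ((n + 1 - p) * (n + 1 - p)) := by ring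
    _ ≤ absFalling (n + 1) p ^ 2 * ((n + 1 - p) * (n + 1 + 1 - p)) :=
        mul_le_mul_of_nonneg_left key (sq_nonneg _)
    _ = absFalling (n + 1) p * (absFalling (n + 1) p * (n + 1 - p) * (n + 1 + 1 - p)) := by ring

lemma prod_range_succ_sub_eq_absFalling (n : ℕ) (p : ℝ) :
    ∏ i ∈ Finset.range (n + 1), (p - i) = (-1) ^ n * absFalling (n + 1) p := by
  have hfactor : ∀ i ∈ Finset.range n, p - ((i + 1 : ℕ) : ℝ) = -1 * ((i : ℝ) + 1 - p) := by
    intro i _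
    push_cast
    ring
  rw [Finset.prod_range_succ', Finset.prod_congr rfl hfactor, Finset.prod_mul_distrib,
    Finset.prod_const, Finset.card_range, absFalling, Nat.add_sub_cancel, Nat.cast_zero, sub_zero]
  ring

end AbsFalling

theorem stmt_4_general (k : ℕ)
    (I : ℕ → ℝ)
    (hI : ∀ n, I n = cubeInt k fun p => p * ∏ i ∈ Finset.range (n - 1), ((i : ℝ) + 1 - p))
    (c : ℕ → ℝ)
    (hc : ∀ n, c n = cubeInt k fun p => ∏ i ∈ Finset.range n, (p - i)) :
    (∀ n : ℕ, 3 ≤ n → I n ^ 2 ≤ I (n - 1) * I (n + 1)) ∧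
      (∀ n : ℕ, 3 ≤ n → |c n| ^ 2 ≤ |c (n - 1)| * |c (n + 1)|) := by
  have hI' : ∀ n, I n = cubeInt k (absFalling n) := hI
  have hI_log : ∀ n : ℕ, 3 ≤ n → I n ^ 2 ≤ I (n - 1) * I (n + 1) := by
    intro n hn
    obtain ⟨m, rfl⟩ : ∃ m, n = m + 2 := ⟨n - 2, by omega⟩
    rw [hI', hI', hI']
    exact sq_cubeInt_le (by fun_prop) (by fun_prop) (fun p => absFalling_nonneg _)
      (fun p => absFalling_nonneg _) (fun p => absFalling_nonneg _)
      (fun p => absFalling_sq_le m)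
  have habs : ∀ n, 1 ≤ n → |c n| = I n := by
    intro n hn
    obtain ⟨m, rfl⟩ : ∃ m, n = m + 1 := ⟨n - 1, by omega⟩
    have hI_nonneg : 0 ≤ I (m + 1) := (hI' _).symm ▸ cubeInt_nonneg fun p => absFalling_nonneg _
    simp only [hc, prod_range_succ_sub_eq_absFalling, cubeInt_const_mul, ← hI', abs_mul,
      abs_pow, abs_neg, abs_one, one_pow, one_mul, abs_of_nonneg hI_nonneg]
  refine ⟨hI_log, fun n hn => ?_⟩
  rw [habs n (by omega), habs (n - 1) (by omega), habs (n + 1) (by omega)]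
  exact hI_log n hn

/-- For `I n = ∫_{[0,1]^k} p(1−p)⋯(n−1−p)` (with `p = x₁⋯x_k`), one has
`I n ^ 2 ≤ I (n−1) * I (n+1)` for `n ≥ 3`; consequently the absolute values of
the poly-Cauchy numbers of the first kind `c n = ∫_{[0,1]^k} (p)_n` form a
log-convex sequence. -/
theorem stmt_4 (k : ℕ) (hk : 0 < k)
    (I : ℕ → ℝ)
    (hI : ∀ n, I n = cubeInt k fun p => p * ∏ i ∈ Finset.range (n - 1), ((i : ℝ) + 1 - p))
    (c : ℕ → ℝ)
    (hc : ∀ n, c n = cubeInt k fun p => ∏ i ∈ Finset.range n, (p - i)) :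
    (∀ n : ℕ, 3 ≤ n → I n ^ 2 ≤ I (n - 1) * I (n + 1)) ∧
      (∀ n : ℕ, 3 ≤ n → |c n| ^ 2 ≤ |c (n - 1)| * |c (n + 1)|) :=
  stmt_4_general k I hI c hc
end

section
/- Let k ≥ 1 and let A = (0, α_1, α_2, …) be a sequence of nonnegative reals. Suppose there exists l ≥ 3 such that α_j ≥ 2 for 1 ≤ j ≤ l and α_j = 1 for j ≥ l+1. Then the sequence σ_{n,A}^{(k)} = ∫_{[0,1]^k} (x_1⋯x_k)(α_1 − x_1⋯x_k)⋯(α_{n−1} − x_1⋯x_k) dx_1⋯dx_k (n ≥ 1) is unimodal with its peak at n = l+1: σ_{n,A}^{(k)} ≤ σ_{n+1,A}^{(k)} for 1 ≤ n ≤ l, and σ_{n,A}^{(k)} ≥ σ_{n+1,A}^{(k)} for n ≥ l+1. -/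
/-
Writing `p = x₁ ⋯ x_k ∈ [0,1]`, the integrand of `σ (n + 1)` is that of `σ n` times
`α n - p`. Every `α j` with `j ≥ 1` is at least `1`, so the integrands are nonnegative;
the extra factor is at least `1` when `α n ≥ 2` and at most `1` when `α n = 1`, and
integrating these pointwise comparisons over the cube gives the two monotonicity claims.
-/

open MeasureTheory

lemma cubeInt_mono (k : ℕ) {f g : ℝ → ℝ} (hf : Continuous f) (hg : Continuous g)
    (h : ∀ p ∈ Set.Icc (0:ℝ) 1, f p ≤ g p) : cubeInt k f ≤ cubeInt k g := by
  have hprod : Continuous fun x : Fin k → ℝ => ∏ i, x i :=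
    continuous_finsetProd _ fun i _ => continuous_apply i
  have hcube : IsCompact (Set.univ.pi fun _ : Fin k => Set.Icc (0:ℝ) 1) :=
    isCompact_univ_pi fun _ => isCompact_Icc
  refine setIntegral_mono_on ((hf.comp hprod).continuousOn.integrableOn_compact hcube)
    ((hg.comp hprod).continuousOn.integrableOn_compact hcube)
    (MeasurableSet.univ_pi fun _ => measurableSet_Icc) fun x hx => h _ ?_
  have hx : ∀ i, x i ∈ Set.Icc (0:ℝ) 1 := fun i => hx i (Set.mem_univ i)
  exact ⟨Finset.prod_nonneg fun i _ => (hx i).1,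
    Finset.prod_le_one (fun i _ => (hx i).1) (fun i _ => (hx i).2)⟩

/-- The integrand of `σ (n + 1)` when `β i = α (i + 1)`. -/
def shiftedProduct (β : ℕ → ℝ) (n : ℕ) (p : ℝ) : ℝ :=
  p * ∏ i ∈ Finset.range n, (β i - p)

namespace shiftedProduct

variable (β : ℕ → ℝ) (n : ℕ)

lemma continuous : Continuous (shiftedProduct β n) :=
  continuous_id.mul (continuous_finsetProd _ fun _ _ => continuous_const.sub continuous_id)

lemma succ (p : ℝ) : shiftedProduct β (n + 1) p = shiftedProduct β n p * (β n - p) := by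
  rw [shiftedProduct, shiftedProduct, Finset.prod_range_succ, mul_assoc]

variable {β n}

lemma nonneg (hβ : ∀ i < n, 1 ≤ β i) {p : ℝ} (hp : p ∈ Set.Icc (0:ℝ) 1) :
    0 ≤ shiftedProduct β n p :=
  mul_nonneg hp.1 <| Finset.prod_nonneg fun i hi =>
    sub_nonneg.2 (hp.2.trans (hβ i (Finset.mem_range.1 hi)))

lemma cubeInt_le_succ (k : ℕ) (hβ : ∀ i < n, 1 ≤ β i) (hβn : 2 ≤ β n) :
    cubeInt k (shiftedProduct β n) ≤ cubeInt k (shiftedProduct β (n + 1)) :=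
  cubeInt_mono k (continuous β n) (continuous β (n + 1)) fun p hp => by
    rw [succ]
    exact le_mul_of_one_le_right (nonneg hβ hp) (by linarith [hp.2])

lemma cubeInt_succ_le (k : ℕ) (hβ : ∀ i < n, 1 ≤ β i) (hβn : β n ≤ 1) :
    cubeInt k (shiftedProduct β (n + 1)) ≤ cubeInt k (shiftedProduct β n) :=
  cubeInt_mono k (continuous β (n + 1)) (continuous β n) fun p hp => by
    rw [succ]
    exact mul_le_of_le_one_right (nonneg hβ hp) (by linarith [hp.1])

end shiftedProduct

theorem stmt_9_general (k : ℕ) (α : ℕ → ℝ) (l : ℕ)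
    (h2 : ∀ j : ℕ, 1 ≤ j → j ≤ l → 2 ≤ α j)
    (h1 : ∀ j : ℕ, l + 1 ≤ j → α j = 1)
    (σ : ℕ → ℝ)
    (hσ : ∀ n, σ n = cubeInt k fun p => p * ∏ i ∈ Finset.range (n - 1), (α (i + 1) - p)) :
    (∀ n : ℕ, 1 ≤ n → n ≤ l → σ n ≤ σ (n + 1)) ∧
      (∀ n : ℕ, l + 1 ≤ n → σ (n + 1) ≤ σ n) := by
  set β : ℕ → ℝ := fun i => α (i + 1)
  have hσβ : ∀ m, σ (m + 1) = cubeInt k (shiftedProduct β m) := fun m => hσ (m + 1)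
  have hβ : ∀ i, 1 ≤ β i := fun i => by
    rcases le_or_gt (i + 1) l with h | h
    · linarith [h2 (i + 1) (Nat.le_add_left 1 i) h]
    · exact (h1 (i + 1) h).ge
  constructor
  · rintro (_ | m) hm1 hm
    · omega
    rw [hσβ, hσβ]
    exact shiftedProduct.cubeInt_le_succ k (fun i _ => hβ i) (h2 (m + 1) (Nat.le_add_left 1 m) hm)
  · rintro (_ | m) hm
    · omega
    rw [hσβ, hσβ]
    exact shiftedProduct.cubeInt_succ_le k (fun i _ => hβ i) (h1 (m + 1) hm).le

/-- If `α j ≥ 2` for `1 ≤ j ≤ l` and `α j = 1` for `j ≥ l + 1` (with `l ≥ 3`,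
`α 0 = 0`, all `α j ≥ 0`), then `σ n = ∫_{[0,1]^k} p(α₁−p)⋯(α_{n−1}−p)` is
unimodal with peak at `l + 1`. -/
theorem stmt_9 (k : ℕ) (hk : 0 < k) (α : ℕ → ℝ) (hα0 : α 0 = 0)
    (hnn : ∀ j, 0 ≤ α j) (l : ℕ) (hl : 3 ≤ l)
    (h2 : ∀ j : ℕ, 1 ≤ j → j ≤ l → 2 ≤ α j)
    (h1 : ∀ j : ℕ, l + 1 ≤ j → α j = 1)
    (σ : ℕ → ℝ)
    (hσ : ∀ n, σ n = cubeInt k fun p => p * ∏ i ∈ Finset.range (n - 1), (α (i + 1) - p)) :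
    (∀ n : ℕ, 1 ≤ n → n ≤ l → σ n ≤ σ (n + 1)) ∧
      (∀ n : ℕ, l + 1 ≤ n → σ (n + 1) ≤ σ n) :=
  stmt_9_general k α l h2 h1 σ hσ
end

section
/- For every positive integer k, the poly-Cauchy numbers of the second kind satisfy the explicit identity (−1)^n ĉ_n^{(k)} = Σ_{m=0}^n [n m] / (m+1)^k, where [n m] are the unsigned Stirling numbers of the first kind. -/
open MeasureTheory

theorem integral_Icc_zero_one_pow (m : ℕ) :
    ∫ x in Set.Icc (0:ℝ) 1, x ^ m = 1 / ((m : ℝ) + 1) := by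
  rw [integral_Icc_eq_integral_Ioc, ← intervalIntegral.integral_of_le zero_le_one,
    integral_pow]
  simp

theorem setIntegral_univ_pi_prod {ι : Type*} [Fintype ι] (s : ι → Set ℝ) (f : ι → ℝ → ℝ) :
    ∫ x : ι → ℝ in Set.univ.pi s, ∏ i, f i (x i) = ∏ i, ∫ y in s i, f i y := by
  rw [volume_pi, Measure.restrict_pi_pi, integral_fintype_prod_eq_prod]

theorem cubeInt_pow (k m : ℕ) : cubeInt k (· ^ m) = 1 / ((m : ℝ) + 1) ^ k := by
  simp only [cubeInt, ← Finset.prod_pow]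
  rw [setIntegral_univ_pi_prod _ fun _ y => y ^ m]
  simp [integral_Icc_zero_one_pow]

theorem cubeInt_sum_mul_pow (k : ℕ) (s : Finset ℕ) (c : ℕ → ℝ) :
    cubeInt k (fun p => ∑ m ∈ s, c m * p ^ m) = ∑ m ∈ s, c m / ((m : ℝ) + 1) ^ k := by
  have hcube : IsCompact (Set.univ.pi fun _ : Fin k => Set.Icc (0:ℝ) 1) :=
    isCompact_univ_pi fun _ => isCompact_Icc
  unfold cubeInt
  rw [integral_finsetSum]
  · refine Finset.sum_congr rfl fun m _ => ?_
    rw [integral_const_mul, ← mul_one_div, ← cubeInt_pow]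
    rfl
  · intro m _
    exact (continuous_const.mul ((continuous_finsetProd _ fun i _ =>
      continuous_apply i).pow m)).continuousOn.integrableOn_compact hcube

/-- `ĉ_n^{(k)} = (−1)^n cubeInt k ⟨·⟩_n`, and `hS` pins `S n m` down as `[n m]`. -/
theorem stmt_13_general (k : ℕ) (S : ℕ → ℕ → ℝ)
    (hS : ∀ (n : ℕ) (x : ℝ),
      ∏ i ∈ Finset.range n, (x + i) = ∑ m ∈ Finset.range (n + 1), S n m * x ^ m)
    (n : ℕ) :
    (-1 : ℝ) ^ n *
        ((-1 : ℝ) ^ n * cubeInt k (fun p => ∏ i ∈ Finset.range n, (p + i))) =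
      ∑ m ∈ Finset.range (n + 1), S n m / ((m : ℝ) + 1) ^ k := by
  simp_rw [hS, cubeInt_sum_mul_pow, ← mul_assoc, ← mul_pow, neg_one_mul, neg_neg, one_pow,
    one_mul]

/-- Explicit formula: `(−1)^n ĉ_n^{(k)} = Σ_{m=0}^n [n m]/(m+1)^k`, where
`ĉ_n^{(k)} = (−1)^n ∫_{[0,1]^k} ⟨p⟩_n` and `S n m = [n m]` are the unsigned
Stirling numbers of the first kind, `⟨x⟩_n = Σ_m S n m x^m`. -/
theorem stmt_13 (k : ℕ) (hk : 0 < k) (S : ℕ → ℕ → ℝ)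
    (hS : ∀ (n : ℕ) (x : ℝ),
      ∏ i ∈ Finset.range n, (x + i) = ∑ m ∈ Finset.range (n + 1), S n m * x ^ m)
    (n : ℕ) :
    (-1 : ℝ) ^ n *
        ((-1 : ℝ) ^ n * cubeInt k (fun p => ∏ i ∈ Finset.range n, (p + i))) =
      ∑ m ∈ Finset.range (n + 1), S n m / ((m : ℝ) + 1) ^ k :=
  stmt_13_general k S hS n
end
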